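/- arXiv:1901.05698 — 4 statements merged into one kernel-verified Lean document; each statement's English description precedes it below -/
import Mathlib

section
/- Let ν be a probability measure on [0,∞) with cumulative distribution function F such that F̄ = 1 − F is everywhere positive and regularly varying at infinity with index θ − α for some 0 < θ < α, and let (a_n) be any sequence with a_n → ∞ and lim_{n→∞} n a_n^{−α} H(a_n) = 1 (such a sequence exists). Then for every x > 0, lim_{n→∞} F_n( a_n x ) = ( 1 + x^{θ−α} ) exp( −(α/(α−θ)) x^{θ−α} ). In particular the Kendall random walk normalized by a_n converges in distribution. -/
/-!
The heart of the matter is Karamata's theorem for the truncated moment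
`H(t) = ∫_{[0,t]} x^α dν`: if the tail `ν(t,∞)` is regularly varying with index `-β`, `β < α`,
then `H(t) ~ β/(α-β) · t^α ν(t,∞)`. Splitting `[0,t] = [0,t/l] ∪ (t/l,t]` for a fixed `l > 1`
shows that the ratio `r(t) = H(t) / (t^α ν(t,∞))` satisfies `r(t) ≤ l^(a-α) r(t/l) + l^a - 1`
as soon as `ν(t/l,∞) / ν(t,∞) ≤ l^a`, which holds eventually for every `a ∈ (β, α)`. This
contraction pushes `r` eventually below its fixed point `(l^a - 1) / (1 - l^(a-α))`, which tends
to `a/(α-a)` as `l → 1`; letting `a → β` gives the upper bound, and the lower one is symmetric.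

With `β = α - θ`, Karamata turns `n a_n^(-α) H(a_n) → 1` into
`n ν(a_n x, ∞) → θ/(α-θ) · x^(θ-α)`. Since `1 - G(t) = ν(t,∞) + t^(-α) H(t)`, this gives
`n (1 - G(a_n x)) → α/(α-θ) · x^(θ-α)`, hence `G(a_n x)^(n-1) → exp(-α/(α-θ) · x^(θ-α))`,
while the remaining factor `n (a_n x)^(-α) H(a_n x) + G(a_n x)` tends to `x^(θ-α) + 1`.
-/

open MeasureTheory Filter Real Topology Set

lemma eventually_lt_of_le_mul_comp_div_add {r : ℝ → ℝ} {l T q C B b : ℝ} (hl : 1 < l)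
    (hT : 0 < T) (hq₀ : 0 ≤ q) (hq₁ : q < 1) (hB : ∀ t ∈ Icc T (l * T), r t ≤ B)
    (hrec : ∀ t, l * T ≤ t → r t ≤ q * r (t / l) + C) (hb : C / (1 - q) < b) :
    ∀ᶠ t in atTop, r t < b := by
  set D := C / (1 - q)
  have hD : q * D + C = D := by
    simp only [D]; field_simp [(sub_pos.2 hq₁).ne']; ring
  have hl₀ : 0 < l := one_pos.trans hl
  have key : ∀ k : ℕ, ∀ t ∈ Icc (l ^ k * T) (l ^ (k + 1) * T), r t ≤ D + q ^ k * (B - D) := by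
    intro k
    induction k with
    | zero => intro t ht; simpa using hB t (by simpa using ht)
    | succ k ih =>
      intro t ht
      have hdiv : t / l ∈ Icc (l ^ k * T) (l ^ (k + 1) * T) := by
        constructor
        · rw [le_div_iff₀ hl₀]; linarith [ht.1, show l ^ k * T * l = l ^ (k + 1) * T by ring]
        · rw [div_le_iff₀ hl₀]; linarith [ht.2, show l ^ (k + 1) * T * l = l ^ (k + 2) * T by ring]
      have hlT : l * T ≤ t := le_trans (by
        rw [pow_succ, mul_comm _ l, mul_assoc]
        gcongr
        exact le_mul_of_one_le_left hT.le (one_le_pow₀ hl.le)) ht.1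
      calc r t ≤ q * r (t / l) + C := hrec t hlT
        _ ≤ q * (D + q ^ k * (B - D)) + C := by gcongr; exact ih _ hdiv
        _ = D + q ^ (k + 1) * (B - D) := by linear_combination hD
  have hsmall : Tendsto (fun k : ℕ => D + q ^ k * (B - D)) atTop (𝓝 D) := by
    simpa using ((tendsto_pow_atTop_nhds_zero_of_lt_one hq₀ hq₁).mul_const (B - D)).const_add D
  obtain ⟨N, hN⟩ := eventually_atTop.1 (hsmall.eventually_lt_const hb)
  filter_upwards [eventually_ge_atTop (l ^ N * T)] with t ht
  have hT_le : T ≤ t := le_trans (le_mul_of_one_le_left hT.le (one_le_pow₀ hl.le)) ht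
  obtain ⟨k, hk, hk'⟩ := exists_nat_pow_near ((one_le_div hT).2 hT_le) hl
  have hNk : N ≤ k := by
    have : l ^ N < l ^ (k + 1) := ((le_div_iff₀ hT).2 ht).trans_lt hk'
    exact Nat.lt_succ_iff.1 ((pow_lt_pow_iff_right₀ hl).1 this)
  exact (key k t ⟨(le_div_iff₀ hT).1 hk, ((div_lt_iff₀ hT).1 hk').le⟩).trans_lt (hN k hNk)

lemma tendsto_div_nhdsNE_of_hasDerivAt {f g : ℝ → ℝ} {f' g' x : ℝ} (hf : HasDerivAt f f' x)
    (hg : HasDerivAt g g' x) (hfx : f x = 0) (hgx : g x = 0) (hg' : g' ≠ 0) :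
    Tendsto (fun y => f y / g y) (𝓝[≠] x) (𝓝 (f' / g')) := by
  refine ((hasDerivAt_iff_tendsto_slope.1 hf).div (hasDerivAt_iff_tendsto_slope.1 hg) hg').congr' ?_
  filter_upwards [self_mem_nhdsWithin] with y hy
  rw [Pi.div_apply, slope_def_field, slope_def_field, hfx, hgx, sub_zero, sub_zero]
  exact div_div_div_cancel_right₀ (sub_ne_zero.2 hy) _ _

lemma tendsto_rpow_sub_one_div_one_sub_rpow {a α : ℝ} (h : a ≠ α) :
    Tendsto (fun l : ℝ => (l ^ a - 1) / (1 - l ^ (a - α))) (𝓝[>] 1) (𝓝 (a / (α - a))) := by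
  have hf : HasDerivAt (fun l : ℝ => l ^ a - 1) a 1 := by
    simpa using (hasDerivAt_rpow_const (p := a) (Or.inl one_ne_zero)).sub_const 1
  have hg : HasDerivAt (fun l : ℝ => 1 - l ^ (a - α)) (α - a) 1 := by
    simpa using (hasDerivAt_rpow_const (p := a - α) (Or.inl one_ne_zero)).const_sub 1
  exact (tendsto_div_nhdsNE_of_hasDerivAt hf hg (by simp) (by simp) (sub_ne_zero.2 h.symm))
    |>.mono_left (nhdsWithin_mono _ fun l hl => ne_of_gt hl)

noncomputable def momentTailRatio (ν : Measure ℝ) (α t : ℝ) : ℝ :=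
  (∫ x in Icc 0 t, x ^ α ∂ν) / (t ^ α * ν.real (Ioi t))

lemma momentTailRatio_nonneg (ν : Measure ℝ) (α : ℝ) {t : ℝ} (ht : 0 ≤ t) :
    0 ≤ momentTailRatio ν α t :=
  div_nonneg (setIntegral_nonneg measurableSet_Icc fun _ hx => rpow_nonneg hx.1 _)
    (mul_nonneg (rpow_nonneg ht _) measureReal_nonneg)

lemma rpow_neg_mul_setIntegral_Icc_rpow (ν : Measure ℝ) (α : ℝ) {t : ℝ} (ht : 0 < t)
    (htail : ν.real (Ioi t) ≠ 0) :
    t ^ (-α) * ∫ x in Icc 0 t, x ^ α ∂ν = ν.real (Ioi t) * momentTailRatio ν α t := by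
  rw [momentTailRatio, rpow_neg ht.le]
  field_simp

section Moment

variable {ν : Measure ℝ} [IsFiniteMeasure ν] {α : ℝ}

lemma setIntegral_Icc_rpow_sub (hα : 0 ≤ α) {u s : ℝ} (hu : 0 ≤ u) (hus : u ≤ s) :
    (∫ x in Icc 0 s, x ^ α ∂ν) - ∫ x in Icc 0 u, x ^ α ∂ν = ∫ x in Ioc u s, x ^ α ∂ν := by
  rw [← Icc_union_Ioc_eq_Icc hu hus, setIntegral_union
    ((Iic_disjoint_Ioi le_rfl).mono Icc_subset_Iic_self Ioc_subset_Ioi_self) measurableSet_Ioc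
    ((continuous_rpow_const hα).integrableOn_Icc) ((continuous_rpow_const hα).integrableOn_Ioc),
    add_sub_cancel_left]

lemma measureReal_Ioi_sub {u s : ℝ} (hus : u ≤ s) :
    ν.real (Ioi u) - ν.real (Ioi s) = ν.real (Ioc u s) := by
  rw [← Ioc_union_Ioi_eq_Ioi hus, measureReal_union Ioc_disjoint_Ioi_same measurableSet_Ioi,
    add_sub_cancel_right]

lemma setIntegral_Icc_rpow_sub_le (hα : 0 ≤ α) {u s : ℝ} (hu : 0 ≤ u) (hus : u ≤ s) :
    (∫ x in Icc 0 s, x ^ α ∂ν) - ∫ x in Icc 0 u, x ^ α ∂ν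
      ≤ s ^ α * (ν.real (Ioi u) - ν.real (Ioi s)) := by
  rw [setIntegral_Icc_rpow_sub hα hu hus, measureReal_Ioi_sub hus, mul_comm]
  simpa using setIntegral_mono_on ((continuous_rpow_const hα).integrableOn_Ioc)
    integrableOn_const measurableSet_Ioc
    fun x hx => rpow_le_rpow (hu.trans hx.1.le) hx.2 hα

lemma rpow_mul_le_setIntegral_Icc_rpow_sub (hα : 0 ≤ α) {u s : ℝ} (hu : 0 ≤ u) (hus : u ≤ s) :
    u ^ α * (ν.real (Ioi u) - ν.real (Ioi s))
      ≤ (∫ x in Icc 0 s, x ^ α ∂ν) - ∫ x in Icc 0 u, x ^ α ∂ν := by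
  rw [setIntegral_Icc_rpow_sub hα hu hus, measureReal_Ioi_sub hus, mul_comm]
  simpa using setIntegral_mono_on integrableOn_const
    ((continuous_rpow_const hα).integrableOn_Ioc) measurableSet_Ioc
    fun x hx => rpow_le_rpow hu hx.1.le hα

lemma setIntegral_Icc_rpow_le (hα : 0 ≤ α) {t : ℝ} (ht : 0 ≤ t) :
    ∫ x in Icc 0 t, x ^ α ∂ν ≤ t ^ α * ν.real univ := by
  calc ∫ x in Icc 0 t, x ^ α ∂ν ≤ ∫ _ in Icc 0 t, t ^ α ∂ν :=
        setIntegral_mono_on ((continuous_rpow_const hα).integrableOn_Icc) integrableOn_const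
          measurableSet_Icc fun x hx => rpow_le_rpow hx.1 hx.2 hα
    _ ≤ t ^ α * ν.real univ := by
        rw [setIntegral_const, smul_eq_mul, mul_comm]
        exact mul_le_mul_of_nonneg_left (measureReal_mono (subset_univ _)) (rpow_nonneg ht _)

-- The bounds on `∫_(t/l, t] x^α dν` divided by `t^α ν(t,∞)`.
lemma momentTailRatio_le_recurrence (hα : 0 ≤ α) {l t : ℝ} (hl : 1 ≤ l) (ht : 0 < t)
    (htail : 0 < ν.real (Ioi t)) :
    momentTailRatio ν α t ≤ l ^ (-α) * (ν.real (Ioi (t / l)) / ν.real (Ioi t))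
      * momentTailRatio ν α (t / l) + (ν.real (Ioi (t / l)) / ν.real (Ioi t) - 1) := by
  have hl₀ : 0 < l := one_pos.trans_le hl
  have htl : t / l ≤ t := div_le_self ht.le hl
  have htail' : 0 < ν.real (Ioi (t / l)) := htail.trans_le (measureReal_mono (Ioi_subset_Ioi htl))
  have hblock := setIntegral_Icc_rpow_sub_le (ν := ν) hα (div_pos ht hl₀).le htl
  unfold momentTailRatio
  rw [div_rpow ht.le hl₀.le, rpow_neg hl₀.le]
  have htα : 0 < t ^ α := rpow_pos_of_pos ht α
  rw [div_le_iff₀ (by positivity)]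
  field_simp
  linarith

lemma le_momentTailRatio_recurrence (hα : 0 ≤ α) {l t : ℝ} (hl : 1 ≤ l) (ht : 0 < t)
    (htail : 0 < ν.real (Ioi t)) :
    l ^ (-α) * (ν.real (Ioi (t / l)) / ν.real (Ioi t) * momentTailRatio ν α (t / l)
      + (ν.real (Ioi (t / l)) / ν.real (Ioi t) - 1)) ≤ momentTailRatio ν α t := by
  have hl₀ : 0 < l := one_pos.trans_le hl
  have htl : t / l ≤ t := div_le_self ht.le hl
  have htail' : 0 < ν.real (Ioi (t / l)) := htail.trans_le (measureReal_mono (Ioi_subset_Ioi htl))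
  have hblock := rpow_mul_le_setIntegral_Icc_rpow_sub (ν := ν) hα (div_pos ht hl₀).le htl
  unfold momentTailRatio
  rw [div_rpow ht.le hl₀.le] at hblock ⊢
  rw [rpow_neg hl₀.le]
  have htα : 0 < t ^ α := rpow_pos_of_pos ht α
  rw [le_div_iff₀ (by positivity)]
  field_simp
  field_simp at hblock
  linarith

lemma eventually_momentTailRatio_lt (hα : 0 ≤ α) (htail : ∀ t, 0 < ν.real (Ioi t))
    {l a b : ℝ} (hl : 1 < l) (haα : a < α)
    (hR : ∀ᶠ t in atTop, ν.real (Ioi (t / l)) / ν.real (Ioi t) ≤ l ^ a)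
    (hb : (l ^ a - 1) / (1 - l ^ (a - α)) < b) :
    ∀ᶠ t in atTop, momentTailRatio ν α t < b := by
  have hl₀ : 0 < l := one_pos.trans hl
  obtain ⟨T₀, hT₀⟩ := eventually_atTop.1 hR
  set T := max T₀ 1
  have hT : 0 < T := one_pos.trans_le (le_max_right _ _)
  refine eventually_lt_of_le_mul_comp_div_add hl hT (rpow_nonneg hl₀.le _)
    (rpow_lt_one_of_one_lt_of_neg hl (by linarith)) (B := ν.real univ / ν.real (Ioi (l * T)))
    (fun t ht => ?_) (fun t ht => ?_) hb
  · have ht₀ : 0 < t := hT.trans_le ht.1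
    calc momentTailRatio ν α t ≤ t ^ α * ν.real univ / (t ^ α * ν.real (Ioi t)) :=
          div_le_div_of_nonneg_right (setIntegral_Icc_rpow_le hα ht₀.le)
            (mul_nonneg (rpow_nonneg ht₀.le _) measureReal_nonneg)
      _ = ν.real univ / ν.real (Ioi t) := mul_div_mul_left _ _ (rpow_pos_of_pos ht₀ _).ne'
      _ ≤ ν.real univ / ν.real (Ioi (l * T)) :=
          div_le_div_of_nonneg_left measureReal_nonneg (htail _)
            (measureReal_mono (Ioi_subset_Ioi ht.2))
  · have ht₀ : 0 < t := hT.trans_le ((le_mul_of_one_le_left hT.le hl.le).trans ht)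
    have hRt := hT₀ t (((le_max_left _ _).trans (le_mul_of_one_le_left hT.le hl.le)).trans ht)
    have hr := momentTailRatio_nonneg ν α (div_pos ht₀ hl₀).le
    calc momentTailRatio ν α t ≤ l ^ (-α) * (ν.real (Ioi (t / l)) / ν.real (Ioi t))
          * momentTailRatio ν α (t / l) + (ν.real (Ioi (t / l)) / ν.real (Ioi t) - 1) :=
          momentTailRatio_le_recurrence hα hl.le ht₀ (htail t)
      _ ≤ l ^ (-α) * l ^ a * momentTailRatio ν α (t / l) + (l ^ a - 1) := by gcongr
      _ = l ^ (a - α) * momentTailRatio ν α (t / l) + (l ^ a - 1) := by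
          rw [← rpow_add hl₀, neg_add_eq_sub]

lemma eventually_lt_momentTailRatio (hα : 0 ≤ α) (htail : ∀ t, 0 < ν.real (Ioi t))
    {l a b : ℝ} (hl : 1 < l) (haα : a < α)
    (hR : ∀ᶠ t in atTop, l ^ a ≤ ν.real (Ioi (t / l)) / ν.real (Ioi t))
    (hb : b < l ^ (-α) * ((l ^ a - 1) / (1 - l ^ (a - α)))) :
    ∀ᶠ t in atTop, b < momentTailRatio ν α t := by
  have hl₀ : 0 < l := one_pos.trans hl
  obtain ⟨T₀, hT₀⟩ := eventually_atTop.1 hR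
  set T := max T₀ 1
  have hT : 0 < T := one_pos.trans_le (le_max_right _ _)
  have key := eventually_lt_of_le_mul_comp_div_add (r := fun t => -momentTailRatio ν α t)
    (q := l ^ (a - α)) (C := -(l ^ (-α) * (l ^ a - 1))) (B := 0) (b := -b) hl hT
    (rpow_nonneg hl₀.le _) (rpow_lt_one_of_one_lt_of_neg hl (by linarith))
    (fun t ht => neg_nonpos.2 (momentTailRatio_nonneg ν α (hT.le.trans ht.1)))
    (fun t ht => ?_) (by rw [neg_div, mul_div_assoc]; linarith)
  · filter_upwards [key] with t ht
    linarith
  · have ht₀ : 0 < t := hT.trans_le ((le_mul_of_one_le_left hT.le hl.le).trans ht)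
    have hRt := hT₀ t (((le_max_left _ _).trans (le_mul_of_one_le_left hT.le hl.le)).trans ht)
    have hr := momentTailRatio_nonneg ν α (div_pos ht₀ hl₀).le
    have hmono : l ^ (-α) * (l ^ a * momentTailRatio ν α (t / l) + (l ^ a - 1))
        ≤ l ^ (-α) * (ν.real (Ioi (t / l)) / ν.real (Ioi t) * momentTailRatio ν α (t / l)
          + (ν.real (Ioi (t / l)) / ν.real (Ioi t) - 1)) := by gcongr
    calc -momentTailRatio ν α t
          ≤ -(l ^ (-α) * (l ^ a * momentTailRatio ν α (t / l) + (l ^ a - 1))) :=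
          neg_le_neg (hmono.trans (le_momentTailRatio_recurrence hα hl.le ht₀ (htail t)))
      _ = l ^ (a - α) * -momentTailRatio ν α (t / l) + -(l ^ (-α) * (l ^ a - 1)) := by
          rw [show a - α = -α + a by ring, rpow_add hl₀]; ring

theorem tendsto_momentTailRatio (hα : 0 ≤ α) {β : ℝ} (hβα : β < α)
    (htail : ∀ t, 0 < ν.real (Ioi t))
    (hRV : ∀ l, 0 < l →
      Tendsto (fun t => ν.real (Ioi (l * t)) / ν.real (Ioi t)) atTop (𝓝 (l ^ (-β)))) :
    Tendsto (momentTailRatio ν α) atTop (𝓝 (β / (α - β))) := by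
  have hR : ∀ l, 1 < l →
      Tendsto (fun t => ν.real (Ioi (t / l)) / ν.real (Ioi t)) atTop (𝓝 (l ^ β)) := by
    intro l hl
    have hl₀ : 0 < l := one_pos.trans hl
    simpa [div_eq_inv_mul, inv_rpow hl₀.le, rpow_neg hl₀.le] using hRV l⁻¹ (inv_pos.2 hl₀)
  have hfrac : Tendsto (fun a => a / (α - a)) (𝓝 β) (𝓝 (β / (α - β))) :=
    (continuousAt_id.div (continuousAt_const.sub continuousAt_id) (sub_ne_zero.2 hβα.ne')).tendsto
  refine tendsto_order.2 ⟨fun b hb => ?_, fun b hb => ?_⟩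
  · obtain ⟨a, hab, haβ⟩ := ((hfrac.mono_left nhdsWithin_le_nhds).eventually
      (lt_mem_nhds hb)).and (self_mem_nhdsWithin (s := Iio β)) |>.exists
    have hlim := ((continuousAt_rpow_const 1 (-α) (Or.inl one_ne_zero)).tendsto.mono_left
      nhdsWithin_le_nhds).mul (tendsto_rpow_sub_one_div_one_sub_rpow (α := α) (a := a)
        (haβ.trans hβα).ne)
    rw [one_rpow, one_mul] at hlim
    obtain ⟨l, hbl, hl⟩ := (hlim.eventually (lt_mem_nhds hab)).and self_mem_nhdsWithin |>.exists
    exact eventually_lt_momentTailRatio hα htail hl (haβ.trans hβα)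
      ((hR l hl).eventually (le_mem_nhds (rpow_lt_rpow_of_exponent_lt hl haβ))) hbl
  · obtain ⟨a, hab, hβa, haα⟩ := ((hfrac.mono_left nhdsWithin_le_nhds).eventually
      (gt_mem_nhds hb)).and ((eventually_mem_nhdsWithin (s := Ioi β)).and
        (nhdsWithin_le_nhds (Iio_mem_nhds hβα))) |>.exists
    obtain ⟨l, hbl, hl⟩ := ((tendsto_rpow_sub_one_div_one_sub_rpow haα.ne).eventually
      (gt_mem_nhds hab)).and self_mem_nhdsWithin |>.exists
    exact eventually_momentTailRatio_lt hα htail hl haα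
      ((hR l hl).eventually (ge_mem_nhds (rpow_lt_rpow_of_exponent_lt hl hβa))) hbl

lemma integral_max_one_sub_div_rpow (hα : 0 < α) (hν : ν (Iio 0) = 0) {t : ℝ} (ht : 0 < t) :
    ∫ x, max (1 - (x / t) ^ α) 0 ∂ν = ν.real (Iic t) - t ^ (-α) * ∫ x in Icc 0 t, x ^ α ∂ν := by
  have hae : ∀ᵐ x ∂ν, 0 ≤ x := by
    rw [ae_iff]; simp only [not_le]; exact hν
  have hpt : (fun x => max (1 - (x / t) ^ α) 0)
      =ᵐ[ν] (Icc 0 t).indicator fun x => 1 - t ^ (-α) * x ^ α := by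
    filter_upwards [hae] with x hx
    have hxt' : (x / t) ^ α = t ^ (-α) * x ^ α := by
      rw [div_rpow hx ht.le, rpow_neg ht.le, div_eq_inv_mul]
    by_cases hxt : x ≤ t
    · rw [indicator_of_mem (mem_Icc.2 ⟨hx, hxt⟩), ← hxt', max_eq_left]
      exact sub_nonneg.2 (rpow_le_one (div_nonneg hx ht.le) ((div_le_one ht).2 hxt) hα.le)
    · rw [indicator_of_notMem fun h => hxt h.2, max_eq_right]
      exact sub_nonpos.2 (one_le_rpow ((one_le_div ht).2 (not_le.1 hxt).le) hα.le)
  have hIcc : ν.real (Icc 0 t) = ν.real (Iic t) := by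
    refine measureReal_congr ?_
    filter_upwards [hae] with x hx
    exact propext ⟨fun h => h.2, fun h => ⟨hx, h⟩⟩
  rw [integral_congr_ae hpt, integral_indicator measurableSet_Icc, integral_sub (integrable_const 1)
    ((continuous_rpow_const hα.le).integrableOn_Icc.const_mul _), integral_const_mul,
    setIntegral_const, smul_eq_mul, mul_one, hIcc]

end Moment

lemma tendsto_nat_mul_measureReal_Ioi_mul {ν : Measure ℝ} {α c κ x : ℝ} {a : ℕ → ℝ}
    (hkar : Tendsto (momentTailRatio ν α) atTop (𝓝 c)) (hc : c ≠ 0)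
    (htail : ∀ t, 0 < ν.real (Ioi t))
    (hRV : Tendsto (fun t => ν.real (Ioi (x * t)) / ν.real (Ioi t)) atTop (𝓝 κ))
    (ha : Tendsto a atTop atTop)
    (haH : Tendsto (fun n : ℕ => n * a n ^ (-α) * ∫ y in Icc 0 (a n), y ^ α ∂ν) atTop (𝓝 1)) :
    Tendsto (fun n : ℕ => n * ν.real (Ioi (a n * x))) atTop (𝓝 (κ / c)) := by
  have htail_a : Tendsto (fun n : ℕ => n * ν.real (Ioi (a n))) atTop (𝓝 (1 / c)) := by
    refine (haH.div (hkar.comp ha) hc).congr' ?_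
    filter_upwards [(hkar.comp ha).eventually_ne hc, ha.eventually_gt_atTop 0] with n hr hn
    rw [Pi.div_apply, Function.comp_apply, mul_assoc, rpow_neg_mul_setIntegral_Icc_rpow ν α hn
      (htail _).ne', ← mul_assoc]
    exact mul_div_cancel_right₀ _ hr
  rw [← one_div_mul_eq_div]
  refine (htail_a.mul (hRV.comp ha)).congr fun n => ?_
  rw [Function.comp_apply, mul_comm x, mul_assoc, mul_div_cancel₀ _ (htail _).ne']

lemma tendsto_nat_mul_rpow_neg_mul_setIntegral {ν : Measure ℝ} {α c m : ℝ} {s : ℕ → ℝ}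
    (hkar : Tendsto (momentTailRatio ν α) atTop (𝓝 c)) (htail : ∀ t, 0 < ν.real (Ioi t))
    (hs : Tendsto s atTop atTop)
    (hm : Tendsto (fun n : ℕ => n * ν.real (Ioi (s n))) atTop (𝓝 m)) :
    Tendsto (fun n : ℕ => n * s n ^ (-α) * ∫ y in Icc 0 (s n), y ^ α ∂ν) atTop (𝓝 (m * c)) := by
  refine (hm.mul (hkar.comp hs)).congr' ?_
  filter_upwards [hs.eventually_gt_atTop 0] with n hn
  rw [Function.comp_apply, mul_assoc _ (s n ^ (-α)),
    rpow_neg_mul_setIntegral_Icc_rpow ν α hn (htail _).ne', mul_assoc]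

lemma tendsto_one_of_tendsto_nat_mul_one_sub {g : ℕ → ℝ} {L : ℝ}
    (hg : Tendsto (fun n : ℕ => (n : ℝ) * (1 - g n)) atTop (𝓝 L)) :
    Tendsto g atTop (𝓝 1) := by
  have h := hg.mul (tendsto_inv_atTop_zero.comp tendsto_natCast_atTop_atTop)
  rw [mul_zero] at h
  have h' : Tendsto (fun n => 1 - g n) atTop (𝓝 0) := h.congr' <| by
    filter_upwards [eventually_ne_atTop 0] with n hn
    simp only [Function.comp_apply]
    field_simp
  simpa using (tendsto_const_nhds (x := (1 : ℝ))).sub h'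

lemma tendsto_pow_pred_of_tendsto_nat_mul_one_sub {g : ℕ → ℝ} {L : ℝ}
    (hg : Tendsto (fun n : ℕ => (n : ℝ) * (1 - g n)) atTop (𝓝 L)) :
    Tendsto (fun n => g n ^ (n - 1)) atTop (𝓝 (exp (-L))) := by
  have hg₁ := tendsto_one_of_tendsto_nat_mul_one_sub hg
  have hpow := tendsto_one_add_pow_exp_of_tendsto (g := fun n => g n - 1) (t := -L)
    (by simpa only [← neg_sub (1 : ℝ), mul_neg] using hg.neg)
  simp only [add_sub_cancel] at hpow
  have hdiv := hpow.div hg₁ one_ne_zero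
  rw [div_one] at hdiv
  refine hdiv.congr' ?_
  filter_upwards [hg₁.eventually_ne one_ne_zero, eventually_ne_atTop 0] with n hn hn₀
  rw [Pi.div_apply, ← pow_sub_one_mul hn₀, mul_div_cancel_right₀ _ hn]

/-- if F̄ = 1 − F is everywhere positive and regularly varying at infinity
with index θ − α (0 < θ < α), and (a_n) is any sequence with a_n → ∞ and
n a_n^{−α} H(a_n) → 1 (such a sequence exists), then for every x > 0,
F_n(a_n x) → (1 + x^{θ−α}) exp( −(α/(α−θ)) x^{θ−α} ) as n → ∞. -/
theorem kendall_clt_regvar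
    (α θ : ℝ) (hα : 0 < α) (hθ : 0 < θ) (hθα : θ < α)
    (ν : Measure ℝ) [IsProbabilityMeasure ν] (hν : ν (Set.Iio 0) = 0)
    (F G H : ℝ → ℝ)
    (hF : ∀ t, F t = (ν (Set.Iic t)).toReal)
    (hG : ∀ t, 0 < t → G t = ∫ x, max (1 - (x / t) ^ α) 0 ∂ν)
    (hH : ∀ t, 0 < t → H t = ∫ x in Set.Icc 0 t, x ^ α ∂ν)
    (htail : ∀ x, F x < 1)
    (hRV : ∀ l, 0 < l →
      Tendsto (fun x => (1 - F (l * x)) / (1 - F x)) atTop (𝓝 (l ^ (θ - α))))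
    (Fn : ℕ → ℝ → ℝ)
    (hFn : ∀ (n : ℕ) (t : ℝ), 0 < t →
      Fn n t = (G t) ^ (n - 1) * ((n : ℝ) * t ^ (-α) * H t + G t))
    (a : ℕ → ℝ) (ha : Tendsto a atTop atTop)
    (haH : Tendsto (fun n : ℕ => (n : ℝ) * (a n) ^ (-α) * H (a n)) atTop (𝓝 1)) :
    (∃ b : ℕ → ℝ, Tendsto b atTop atTop ∧
      Tendsto (fun n : ℕ => (n : ℝ) * (b n) ^ (-α) * H (b n)) atTop (𝓝 1)) ∧
    ∀ x, 0 < x →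
      Tendsto (fun n : ℕ => Fn n (a n * x)) atTop
        (𝓝 ((1 + x ^ (θ - α)) * Real.exp (-(α / (α - θ)) * x ^ (θ - α)))) := by
  refine ⟨⟨a, ha, haH⟩, fun x hx => ?_⟩
  have hF' : ∀ t, 1 - F t = ν.real (Ioi t) := fun t => by
    rw [hF, ← measureReal_def, ← compl_Iic, measureReal_compl measurableSet_Iic, probReal_univ]
  have hpos : ∀ t, 0 < ν.real (Ioi t) := fun t => hF' t ▸ sub_pos.2 (htail t)
  have hkar : Tendsto (momentTailRatio ν α) atTop (𝓝 ((α - θ) / θ)) := by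
    simpa [sub_sub_cancel] using tendsto_momentTailRatio hα.le (sub_lt_self α hθ) hpos
      (by simpa [hF', neg_sub] using hRV)
  have hc : (α - θ) / θ ≠ 0 := (div_pos (sub_pos.2 hθα) hθ).ne'
  have hax : Tendsto (fun n => a n * x) atTop atTop := ha.atTop_mul_const hx
  have htail_ax := tendsto_nat_mul_measureReal_Ioi_mul (κ := x ^ (θ - α)) hkar hc hpos
    (by simpa only [hF'] using hRV x hx) ha <| haH.congr' <|
      (ha.eventually_gt_atTop 0).mono fun n hn => by rw [hH _ hn]
  have hmoment_ax : Tendsto (fun n : ℕ => n * (a n * x) ^ (-α) * H (a n * x)) atTop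
      (𝓝 (x ^ (θ - α))) := by
    rw [← div_mul_cancel₀ (x ^ (θ - α)) hc]
    refine (tendsto_nat_mul_rpow_neg_mul_setIntegral hkar hpos hax htail_ax).congr' ?_
    filter_upwards [hax.eventually_gt_atTop 0] with n hn
    rw [hH _ hn]
  have hG' : Tendsto (fun n : ℕ => n * (1 - G (a n * x))) atTop
      (𝓝 (α / (α - θ) * x ^ (θ - α))) := by
    have hL : x ^ (θ - α) / ((α - θ) / θ) + x ^ (θ - α) = α / (α - θ) * x ^ (θ - α) := by
      field_simp [(sub_pos.2 hθα).ne']; ring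
    rw [← hL]
    refine (htail_ax.add hmoment_ax).congr' ?_
    filter_upwards [hax.eventually_gt_atTop 0] with n hn
    rw [hG _ hn, integral_max_one_sub_div_rpow hα hν hn, ← hH _ hn, ← hF', hF, measureReal_def]
    ring
  have hlim := (tendsto_pow_pred_of_tendsto_nat_mul_one_sub hG').mul
    (hmoment_ax.add (tendsto_one_of_tendsto_nat_mul_one_sub hG'))
  rw [mul_comm, add_comm, neg_mul]
  exact hlim.congr' ((hax.eventually_gt_atTop 0).mono fun n hn => (hFn n _ hn).symm)
end

section
/- Let 0 < θ < α and let H : (0,∞) → (0,∞) be a measurable function which is regularly varying at infinity with index θ, i.e. for every λ > 0, H(λt)/H(t) → λ^θ as t → ∞. Then there exists a sequence (a_n) with a_n → ∞ such that lim_{n→∞} n H(a_n) / a_n^{α} = 1. -/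
open MeasureTheory Filter Real Topology

open Set ENNReal


/-- Egorov-based key lemma: sequencewise uniform convergence at shift 0. -/
lemma egorov_key (k : ℝ → ℝ) (hk : Measurable k)
    (h0 : ∀ u : ℝ, Tendsto (fun x => k (x + u) - k x) atTop (𝓝 0))
    (x : ℕ → ℝ) (hx : Tendsto x atTop atTop)
    (δ : ℕ → ℝ) (hδ : Tendsto δ atTop (𝓝 0)) :
    Tendsto (fun n => k (x n + δ n) - k (x n)) atTop (𝓝 0) := by
  set f : ℕ → ℝ → ℝ := fun n u =>
    |k (x n + u) - k (x n)| + |k (x n + δ n + u) - k (x n + δ n)| with hf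
  have hxd : Tendsto (fun n => x n + δ n) atTop atTop :=
    tendsto_atTop_add_right_of_le' atTop (-1) hx
      ((hδ.eventually (eventually_ge_nhds (by norm_num : (-1:ℝ) < 0))))
  have hfm : ∀ n, StronglyMeasurable (f n) := by
    intro n
    apply Measurable.stronglyMeasurable
    exact (((hk.comp (measurable_const.add measurable_id)).sub measurable_const).abs.add
      ((hk.comp (measurable_const.add measurable_id)).sub measurable_const).abs)
  have hfg : ∀ u : ℝ, Tendsto (fun n => f n u) atTop (𝓝 0) := by
    intro u
    have h1 : Tendsto (fun n => k (x n + u) - k (x n)) atTop (𝓝 0) := (h0 u).comp hx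
    have h2 : Tendsto (fun n => k (x n + δ n + u) - k (x n + δ n)) atTop (𝓝 0) :=
      (h0 u).comp hxd
    simpa using (h1.abs.add h2.abs)
  obtain ⟨t, hts, htm, htμ, hunif⟩ :=
    tendstoUniformlyOn_of_ae_tendsto (μ := volume) (s := Icc (0:ℝ) 2) hfm
      stronglyMeasurable_zero measurableSet_Icc (by simp)
      (Filter.Eventually.of_forall fun u _ => by simpa using hfg u)
      (by norm_num : (0:ℝ) < 1/8)
  set E : Set ℝ := Icc (0:ℝ) 2 \ t with hE
  have hEm : MeasurableSet E := measurableSet_Icc.diff htm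
  have hEsub : E ⊆ Icc (0:ℝ) 2 := diff_subset
  have htμ' : volume t ≤ (1/8 : ℝ≥0∞) := by
    refine htμ.trans (le_of_eq ?_)
    rw [ENNReal.ofReal_div_of_pos (by norm_num)]
    norm_num
  have hEμ : (15/8 : ℝ≥0∞) ≤ volume E := by
    have h2 : volume (Icc (0:ℝ) 2) = 2 := by simp [Real.volume_Icc]
    have hd : volume E = volume (Icc (0:ℝ) 2) - volume t :=
      measure_diff hts htm.nullMeasurableSet (htμ'.trans_lt (by norm_num)).ne
    rw [hd, h2]
    calc (15/8 : ℝ≥0∞) = 2 - 1/8 :=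
          (ENNReal.sub_eq_of_eq_add (by norm_num) (by
            rw [ENNReal.div_add_div_same, show (15+1:ℝ≥0∞) = 16 by norm_num,
              ENNReal.eq_div_iff (by norm_num) (by norm_num)]
            norm_num)).symm
      _ ≤ 2 - volume t := tsub_le_tsub_left htμ' 2
  rw [NormedAddCommGroup.tendsto_nhds_zero]
  intro ε hε
  have hεd : (0:ℝ) < ε/2 := by linarith
  have hev1 : ∀ᶠ n in atTop, ∀ u ∈ E, |f n u| < ε/2 := by
    have := (Metric.tendstoUniformlyOn_iff.mp hunif) (ε/2) hεd
    filter_upwards [this] with n hn u hu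
    simpa [Real.dist_eq, abs_sub_comm] using hn u hu
  have hev2 : ∀ᶠ n in atTop, |δ n| < 1/2 := by
    have := hδ.eventually (Metric.ball_mem_nhds 0 (by norm_num : (0:ℝ) < 1/2))
    simpa [Real.dist_eq] using this
  filter_upwards [hev1, hev2] with n hn hδn
  -- find s₀ ∈ E with s₀ + δ n ∈ E
  obtain ⟨s₀, hs₀E, hs₀E'⟩ : ∃ s₀, s₀ ∈ E ∧ s₀ + δ n ∈ E := by
    by_contra hcon
    push_neg at hcon
    have hdisj : Disjoint E ((fun h => h + δ n) ⁻¹' E) := by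
      rw [Set.disjoint_left]
      intro a haE haB
      exact hcon a haE haB
    have hBm : MeasurableSet ((fun h => h + δ n) ⁻¹' E) := hEm.preimage (measurable_add_const _)
    have hBμ : volume ((fun h => h + δ n) ⁻¹' E) = volume E := by
      exact measure_preimage_add_right volume (δ n) E
    have hab := abs_lt.mp hδn
    have hsub : E ∪ ((fun h => h + δ n) ⁻¹' E) ⊆ Icc (-(1/2) : ℝ) (5/2) := by
      rintro a (ha | ha)
      · have h := hEsub ha
        simp only [mem_Icc] at h ⊢
        constructor <;> linarith [h.1, h.2]
      · have h := hEsub ha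
        simp only [mem_preimage] at ha
        simp only [mem_Icc] at h ⊢
        constructor <;> linarith [h.1, h.2, hab.1, hab.2]
    have h1 : volume (E ∪ ((fun h => h + δ n) ⁻¹' E)) = volume E + volume ((fun h => h + δ n) ⁻¹' E) :=
      measure_union hdisj hBm
    have h2 : volume (E ∪ ((fun h => h + δ n) ⁻¹' E)) ≤ volume (Icc (-(1/2) : ℝ) (5/2)) :=
      measure_mono hsub
    rw [h1, hBμ] at h2
    have h3 : volume (Icc (-(1/2) : ℝ) (5/2)) = 3 := by
      rw [Real.volume_Icc]; norm_num
    rw [h3] at h2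
    have hcontra : (15/8 : ℝ≥0∞) + 15/8 ≤ 3 := le_trans (add_le_add hEμ hEμ) h2
    rw [ENNReal.div_add_div_same, show (15+15:ℝ≥0∞) = 30 by norm_num,
      ENNReal.div_le_iff (by norm_num) (by norm_num)] at hcontra
    norm_num at hcontra
  -- main estimate
  have key : k (x n + δ n) - k (x n) =
      (k (x n + (s₀ + δ n)) - k (x n)) - (k (x n + δ n + s₀) - k (x n + δ n)) := by
    ring_nf
  rw [key]
  have e1 : |k (x n + (s₀ + δ n)) - k (x n)| ≤ f n (s₀ + δ n) := by
    have : (0:ℝ) ≤ |k (x n + δ n + (s₀ + δ n)) - k (x n + δ n)| := abs_nonneg _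
    simp only [hf]; linarith
  have e2 : |k (x n + δ n + s₀) - k (x n + δ n)| ≤ f n s₀ := by
    have : (0:ℝ) ≤ |k (x n + s₀) - k (x n)| := abs_nonneg _
    simp only [hf]; linarith
  have b1 : f n (s₀ + δ n) < ε/2 := lt_of_abs_lt (hn _ hs₀E')
  have b2 : f n s₀ < ε/2 := lt_of_abs_lt (hn _ hs₀E)
  calc ‖(k (x n + (s₀ + δ n)) - k (x n)) - (k (x n + δ n + s₀) - k (x n + δ n))‖
      ≤ |k (x n + (s₀ + δ n)) - k (x n)| + |k (x n + δ n + s₀) - k (x n + δ n)| := norm_sub_le _ _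
    _ < ε/2 + ε/2 := by have := lt_of_le_of_lt e1 b1; have := lt_of_le_of_lt e2 b2; linarith
    _ = ε := by ring

lemma uct_key (k : ℝ → ℝ) (hk : Measurable k)
    (h0 : ∀ u : ℝ, Tendsto (fun x => k (x + u) - k x) atTop (𝓝 0))
    (ε : ℝ) (hε : 0 < ε) :
    ∃ X : ℝ, ∀ x ≥ X, ∀ u ∈ Icc (0:ℝ) 1, |k (x + u) - k x| ≤ ε := by
  by_contra hcon
  push_neg at hcon
  have hch : ∀ X : ℝ, ∃ p : ℝ × ℝ, p.1 ≥ X ∧ p.2 ∈ Icc (0:ℝ) 1 ∧ ε < |k (p.1 + p.2) - k p.1| := by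
    intro X
    obtain ⟨x, hx, u, hu, h⟩ := hcon X
    exact ⟨⟨x, u⟩, hx, hu, h⟩
  choose p hp1 hp2 hp3 using fun n : ℕ => hch n
  set x : ℕ → ℝ := fun n => (p n).1
  set u : ℕ → ℝ := fun n => (p n).2
  have hxtop : Tendsto x atTop atTop :=
    tendsto_atTop_mono (fun n => hp1 n) tendsto_natCast_atTop_atTop
  obtain ⟨δ₀, hδ₀, φ, hφ, hconv⟩ := isCompact_Icc.tendsto_subseq hp2
  have hxφ : Tendsto (fun m => x (φ m)) atTop atTop :=
    hxtop.comp hφ.tendsto_atTop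
  have hxφδ : Tendsto (fun m => x (φ m) + δ₀) atTop atTop :=
    tendsto_atTop_add_const_right _ δ₀ hxφ
  have hdiff : Tendsto (fun m => u (φ m) - δ₀) atTop (𝓝 0) := by
    simpa using hconv.sub_const δ₀
  have h1 : Tendsto (fun m => k ((x (φ m) + δ₀) + (u (φ m) - δ₀)) - k (x (φ m) + δ₀))
      atTop (𝓝 0) := egorov_key k hk h0 _ hxφδ _ hdiff
  have h2 : Tendsto (fun m => k (x (φ m) + δ₀) - k (x (φ m))) atTop (𝓝 0) :=
    (h0 δ₀).comp hxφ
  have h3 : Tendsto (fun m => k (x (φ m) + u (φ m)) - k (x (φ m))) atTop (𝓝 0) := by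
    have := h1.add h2
    rw [add_zero] at this
    refine this.congr fun m => ?_
    ring_nf
  have := h3.eventually (eventually_abs_sub_lt 0 hε)
  simp only [sub_zero] at this
  obtain ⟨m, hm⟩ := this.exists
  exact absurd hm (not_lt.mpr (le_of_lt (hp3 (φ m))))

lemma drift_key (k : ℝ → ℝ) (ρ : ℝ) (hρ : 0 < ρ)
    (huct : ∃ X : ℝ, ∀ x ≥ X, ∀ u ∈ Icc (0:ℝ) 1, |k (x + u) - k x| ≤ ρ/2) :
    Tendsto (fun x => k x + ρ * x) atTop atTop := by
  obtain ⟨X, hX⟩ := huct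
  have step : ∀ n : ℕ, ∀ y : ℝ, X + n ≤ y → y ≤ X + n + 1 → k X - ρ/2 * (n+1) ≤ k y := by
    intro n
    induction n with
    | zero =>
      intro y h1 h2
      push_cast at h1 h2
      have := hX X le_rfl (y - X) ⟨by linarith [h1], by linarith [h2]⟩
      have := abs_le.mp this
      push_cast
      have : k X - k (X + (y - X)) ≤ ρ/2 := by linarith [this.1, this.2]
      have hxy : X + (y - X) = y := by ring
      rw [hxy] at this
      linarith
    | succ n ih =>
      intro y h1 h2
      push_cast at h1 h2 ⊢
      have hy1 : X + n ≤ y - 1 := by linarith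
      have hy2 : y - 1 ≤ X + n + 1 := by linarith
      have ihy := ih (y - 1) (by push_cast; linarith) (by push_cast; linarith)
      push_cast at ihy
      have hge : y - 1 ≥ X := by
        have : (0:ℝ) ≤ n := Nat.cast_nonneg n
        linarith
      have := hX (y - 1) hge 1 ⟨by norm_num, le_rfl⟩
      have habs := abs_le.mp this
      have : k (y - 1) - k (y - 1 + 1) ≤ ρ/2 := by linarith [habs.1, habs.2]
      have hxy : y - 1 + 1 = y := by ring
      rw [hxy] at this
      linarith
  have bound : ∀ y ≥ X, k X + ρ/2 * X - ρ/2 + ρ/2 * y ≤ k y + ρ * y := by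
    intro y hy
    set n : ℕ := ⌊y - X⌋₊ with hn
    have h0 : (0:ℝ) ≤ y - X := by linarith
    have h1 : (n:ℝ) ≤ y - X := Nat.floor_le h0
    have h2 : y - X < n + 1 := Nat.lt_floor_add_one _
    have := step n y (by linarith) (by linarith)
    nlinarith [this]
  have hlin : Tendsto (fun y : ℝ => k X + ρ/2 * X - ρ/2 + ρ/2 * y) atTop atTop :=
    tendsto_atTop_add_const_left _ _ (Tendsto.const_mul_atTop (by linarith) tendsto_id)
  exact tendsto_atTop_mono'  atTop
    (by filter_upwards [eventually_ge_atTop X] with y hy using bound y hy) hlin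

/-- if 0 < θ < α and H : (0,∞) → (0,∞) is measurable and regularly varying
at infinity with index θ, then there is a sequence (a_n) with a_n → ∞ and
n H(a_n) / a_n^α → 1 as n → ∞. -/
theorem exists_norming_sequence
    (α θ : ℝ) (hα : 0 < α) (hθ : 0 < θ) (hθα : θ < α)
    (H : ℝ → ℝ) (hmeas : Measurable H)
    (hpos : ∀ t, 0 < t → 0 < H t)
    (hRV : ∀ l, 0 < l → Tendsto (fun t => H (l * t) / H t) atTop (𝓝 (l ^ θ))) :
    ∃ a : ℕ → ℝ, Tendsto a atTop atTop ∧
      Tendsto (fun n : ℕ => (n : ℝ) * H (a n) / (a n) ^ α) atTop (𝓝 1) := by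
  classical
  set ρ : ℝ := α - θ with hρdef
  have hρ : 0 < ρ := by simp only [hρdef]; linarith
  set g : ℝ → ℝ := fun t => t ^ α / H t with hgdef
  have hgpos : ∀ t : ℝ, 0 < t → 0 < g t := fun t ht =>
    div_pos (rpow_pos_of_pos ht α) (hpos t ht)
  set k : ℝ → ℝ := fun x => θ * x - log (H (exp x)) with hkdef
  have hk : Measurable k :=
    (measurable_const.mul measurable_id).sub
      (Real.measurable_log.comp (hmeas.comp Real.measurable_exp))
  have hlogg : ∀ x : ℝ, k x + ρ * x = log (g (exp x)) := by
    intro x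
    have h1 : g (exp x) = (exp x) ^ α / H (exp x) := rfl
    rw [h1, Real.log_div (by positivity) (ne_of_gt (hpos _ (exp_pos x))),
      Real.log_rpow (exp_pos x), Real.log_exp]
    simp only [hkdef, hρdef]
    ring
  have h0 : ∀ u : ℝ, Tendsto (fun x => k (x + u) - k x) atTop (𝓝 0) := by
    intro u
    have hl : (0:ℝ) < exp u := exp_pos u
    have h1 : Tendsto (fun x : ℝ => H (exp u * exp x) / H (exp x)) atTop (𝓝 ((exp u) ^ θ)) :=
      (hRV (exp u) hl).comp Real.tendsto_exp_atTop
    have h2 : Tendsto (fun x : ℝ => log (H (exp u * exp x) / H (exp x))) atTop (𝓝 (θ * u)) := by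
      have hc : ContinuousAt Real.log ((exp u) ^ θ) :=
        Real.continuousAt_log (ne_of_gt (rpow_pos_of_pos hl θ))
      have := hc.tendsto.comp h1
      rwa [Real.log_rpow hl, Real.log_exp] at this
    have h3 : Tendsto (fun x : ℝ => θ * u - log (H (exp u * exp x) / H (exp x)))
        atTop (𝓝 (θ * u - θ * u)) := tendsto_const_nhds.sub h2
    rw [sub_self] at h3
    refine h3.congr fun x => ?_
    have he : exp u * exp x = exp (x + u) := by rw [← Real.exp_add, add_comm]
    rw [he, Real.log_div (ne_of_gt (hpos _ (exp_pos _))) (ne_of_gt (hpos _ (exp_pos _)))]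
    simp only [hkdef]
    ring
  -- ratio lemma
  have key_ratio : ∀ t u : ℕ → ℝ, Tendsto t atTop atTop → (∀ᶠ n in atTop, 0 < u n) →
      Tendsto u atTop (𝓝 1) →
      Tendsto (fun n => g (u n * t n) / g (t n)) atTop (𝓝 1) := by
    intro t u ht hupos hu
    have hx : Tendsto (fun n => log (t n)) atTop atTop := Real.tendsto_log_atTop.comp ht
    have hδ : Tendsto (fun n => log (u n)) atTop (𝓝 0) := by
      have hc : ContinuousAt Real.log 1 := Real.continuousAt_log one_ne_zero
      have := hc.tendsto.comp hu
      rwa [Real.log_one] at this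
    have hD := egorov_key k hk h0 _ hx _ hδ
    have hsum : Tendsto (fun n =>
        (k (log (t n) + log (u n)) - k (log (t n))) + ρ * log (u n)) atTop (𝓝 0) := by
      have := hD.add (hδ.const_mul ρ)
      simpa using this
    have hexp : Tendsto (fun n =>
        exp ((k (log (t n) + log (u n)) - k (log (t n))) + ρ * log (u n))) atTop (𝓝 1) := by
      have := (Real.continuous_exp.tendsto 0).comp hsum
      rwa [Real.exp_zero] at this
    refine hexp.congr' ?_
    filter_upwards [ht.eventually (eventually_gt_atTop 0), hupos] with n htn hun
    have hgt : 0 < g (t n) := hgpos _ htn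
    have hgut : 0 < g (u n * t n) := hgpos _ (mul_pos hun htn)
    rw [← Real.exp_log hgut, ← Real.exp_log hgt, ← Real.exp_sub]
    congr 1
    have e1 := hlogg (log (t n))
    rw [Real.exp_log htn] at e1
    have e2 := hlogg (log (t n) + log (u n))
    rw [Real.exp_add, Real.exp_log htn, Real.exp_log hun] at e2
    rw [mul_comm (u n) (t n)]
    linarith [e1, e2]
  -- g tends to infinity
  have hdrift : Tendsto (fun x => k x + ρ * x) atTop atTop :=
    drift_key k ρ hρ (uct_key k hk h0 (ρ/2) (by linarith))
  have hgexp : Tendsto (fun x => g (exp x)) atTop atTop := by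
    have h1 : Tendsto (fun x => exp (k x + ρ * x)) atTop atTop :=
      Real.tendsto_exp_atTop.comp hdrift
    refine h1.congr fun x => ?_
    rw [hlogg x, Real.exp_log (hgpos _ (exp_pos x))]
  have hgtop : ∀ C : ℝ, ∃ T : ℝ, 1 ≤ T ∧ ∀ t ≥ T, C < g t := by
    intro C
    obtain ⟨X, hX⟩ := eventually_atTop.mp (tendsto_atTop.mp hgexp (C + 1))
    refine ⟨max 1 (exp X), le_max_left _ _, fun t ht => ?_⟩
    have ht0 : (0:ℝ) < t := lt_of_lt_of_le (exp_pos X) (le_trans (le_max_right _ _) ht)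
    have hlt : X ≤ log t := by
      rw [← Real.exp_le_exp, Real.exp_log ht0]
      exact le_trans (le_max_right _ _) ht
    have := hX (log t) hlt
    rw [Real.exp_log ht0] at this
    linarith
  -- the sequence
  set S : ℕ → Set ℝ := fun n => {s : ℝ | 1 ≤ s ∧ g s ≤ (n:ℝ)} with hSdef
  have hbdd : ∀ n : ℕ, BddAbove (S n) := by
    intro n
    obtain ⟨T, hT1, hT⟩ := hgtop n
    refine ⟨T, fun s hs => ?_⟩
    by_contra hc
    push_neg at hc
    exact absurd hs.2 (not_le.mpr (hT s hc.le))
  set a : ℕ → ℝ := fun n => sSup (S n) with ha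
  have hmem1 : ∀ᶠ n : ℕ in atTop, (1:ℝ) ∈ S n := by
    filter_upwards [tendsto_natCast_atTop_atTop.eventually_ge_atTop (g 1)] with n hn
    exact ⟨le_rfl, hn⟩
  have ha1 : ∀ᶠ n : ℕ in atTop, 1 ≤ a n := by
    filter_upwards [hmem1] with n hn using le_csSup (hbdd n) hn
  have hatop : Tendsto a atTop atTop := by
    rw [tendsto_atTop]
    intro M
    filter_upwards [tendsto_natCast_atTop_atTop.eventually_ge_atTop (g (max 1 M))] with n hn
    have hmem : max 1 M ∈ S n := ⟨le_max_left _ _, hn⟩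
    exact le_trans (le_max_right 1 M) (le_csSup (hbdd n) hmem)
  refine ⟨a, hatop, ?_⟩
  -- upper bound
  have hupper : ∀ᶠ n : ℕ in atTop, (n:ℝ) < g ((1 + 1/((n:ℝ)+1)) * a n) := by
    filter_upwards [ha1] with n h1
    have hfrac : (0:ℝ) < 1/((n:ℝ)+1) := by positivity
    have hban : a n < (1 + 1/((n:ℝ)+1)) * a n := by nlinarith
    by_contra hc
    push_neg at hc
    have hb1 : (1:ℝ) ≤ (1 + 1/((n:ℝ)+1)) * a n := le_trans h1 hban.le
    have : (1 + 1/((n:ℝ)+1)) * a n ∈ S n := ⟨hb1, hc⟩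
    exact absurd (le_csSup (hbdd n) this) (not_le.mpr hban)
  have huu : Tendsto (fun n : ℕ => 1 + 1/((n:ℝ)+1)) atTop (𝓝 1) := by
    have h1 : Tendsto (fun n : ℕ => 1/((n:ℝ)+1)) atTop (𝓝 0) :=
      tendsto_one_div_add_atTop_nhds_zero_nat
    have h2 : Tendsto (fun n : ℕ => 1 + 1/((n:ℝ)+1)) atTop (𝓝 (1 + 0)) :=
      tendsto_const_nhds.add h1
    simpa using h2
  have hU : Tendsto (fun n : ℕ => g ((1 + 1/((n:ℝ)+1)) * a n) / g (a n)) atTop (𝓝 1) :=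
    key_ratio a (fun n : ℕ => 1 + 1/((n:ℝ)+1)) hatop
      (Eventually.of_forall fun n => by positivity) huu
  -- lower bound via choice
  have hex : ∀ᶠ n : ℕ in atTop, ∃ s : ℝ, s ∈ S n ∧ a n - 1/((n:ℝ)+1) < s := by
    filter_upwards [hmem1] with n hn
    have hlt : a n - 1/((n:ℝ)+1) < a n := by
      have : (0:ℝ) < 1/((n:ℝ)+1) := by positivity
      linarith
    obtain ⟨s, hsS, hs⟩ := exists_lt_of_lt_csSup ⟨1, hn⟩ hlt
    exact ⟨s, hsS, hs⟩
  set s : ℕ → ℝ := fun n =>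
    if h : ∃ s : ℝ, s ∈ S n ∧ a n - 1/((n:ℝ)+1) < s then h.choose else 1 with hsdef
  have hsprop : ∀ᶠ n : ℕ in atTop, s n ∈ S n ∧ a n - 1/((n:ℝ)+1) < s n := by
    filter_upwards [hex] with n hn
    simp only [hsdef, dif_pos hn]
    exact hn.choose_spec
  have hsle : ∀ᶠ n : ℕ in atTop, s n ≤ a n := by
    filter_upwards [hsprop] with n hn using le_csSup (hbdd n) hn.1
  have hulowpos : ∀ᶠ n : ℕ in atTop, 0 < s n / a n := by
    filter_upwards [hsprop, ha1] with n hn h1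
    exact div_pos (lt_of_lt_of_le one_pos hn.1.1) (lt_of_lt_of_le one_pos h1)
  have hulow : Tendsto (fun n : ℕ => s n / a n) atTop (𝓝 1) := by
    have hlow : Tendsto (fun n : ℕ => 1 - 1/((n:ℝ)+1)) atTop (𝓝 1) := by
      have h1 : Tendsto (fun n : ℕ => 1/((n:ℝ)+1)) atTop (𝓝 0) :=
        tendsto_one_div_add_atTop_nhds_zero_nat
      have h2 : Tendsto (fun n : ℕ => 1 - 1/((n:ℝ)+1)) atTop (𝓝 (1 - 0)) :=
        tendsto_const_nhds.sub h1
      simpa using h2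
    refine tendsto_of_tendsto_of_tendsto_of_le_of_le' hlow tendsto_const_nhds ?_ ?_
    · filter_upwards [hsprop, ha1] with n hn h1
      have hapos : (0:ℝ) < a n := lt_of_lt_of_le one_pos h1
      rw [le_div_iff₀ hapos]
      have h2 := hn.2
      have hfr : 1/((n:ℝ)+1) * a n ≥ 1/((n:ℝ)+1) := by
        have : (0:ℝ) < 1/((n:ℝ)+1) := by positivity
        nlinarith
      nlinarith
    · filter_upwards [hsle, ha1] with n hn h1
      exact div_le_one_of_le₀ hn (by linarith)
  have hL0 : Tendsto (fun n => g ((s n / a n) * a n) / g (a n)) atTop (𝓝 1) :=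
    key_ratio a (fun n => s n / a n) hatop hulowpos hulow
  have hL : Tendsto (fun n => g (s n) / g (a n)) atTop (𝓝 1) := by
    refine hL0.congr' ?_
    filter_upwards [ha1] with n h1
    have : (0:ℝ) < a n := lt_of_lt_of_le one_pos h1
    rw [div_mul_cancel₀ _ (ne_of_gt this)]
  -- squeeze
  have hP : Tendsto (fun n : ℕ => (n:ℝ) / g (a n)) atTop (𝓝 1) := by
    refine tendsto_of_tendsto_of_tendsto_of_le_of_le' hL hU ?_ ?_
    · filter_upwards [hsprop, ha1] with n hn h1
      have hga : 0 < g (a n) := hgpos _ (lt_of_lt_of_le one_pos h1)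
      have hgs : g (s n) ≤ (n:ℝ) := hn.1.2
      gcongr
    · filter_upwards [hupper, ha1] with n hn h1
      have hga : 0 < g (a n) := hgpos _ (lt_of_lt_of_le one_pos h1)
      have := hn.le
      gcongr
  refine hP.congr' ?_
  filter_upwards [ha1] with n h1
  have hapos : (0:ℝ) < a n := lt_of_lt_of_le one_pos h1
  have hH : 0 < H (a n) := hpos _ hapos
  have : g (a n) = (a n) ^ α / H (a n) := rfl
  rw [this, div_div_eq_mul_div]
end

section
/- For every real number a and every integer n ≥ 2, (1 − a)^{n−1} (1 + (n−1)a) = 1 + n Σ_{k=1}^{n−1} (−1)^{k−1} binom(n−1, k−1) ((k−1)/k) a^k + (−1)^{n−1} (n−1) a^n. -/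
open Finset

/-- for every real a and every integer n ≥ 2,
(1 − a)^{n−1} (1 + (n−1)a)
  = 1 + n Σ_{k=1}^{n−1} (−1)^{k−1} C(n−1, k−1) ((k−1)/k) a^k + (−1)^{n−1} (n−1) a^n. -/
theorem kendall_polynomial_identity (a : ℝ) (n : ℕ) (hn : 2 ≤ n) :
    (1 - a) ^ (n - 1) * (1 + ((n : ℝ) - 1) * a)
      = 1 + (n : ℝ) * (∑ k ∈ Finset.Icc 1 (n - 1),
            (-1 : ℝ) ^ (k - 1) * ((n - 1).choose (k - 1) : ℝ) * (((k : ℝ) - 1) / k) * a ^ k)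
          + (-1 : ℝ) ^ (n - 1) * ((n : ℝ) - 1) * a ^ n := by
  obtain ⟨N, rfl⟩ : ∃ N, n = N + 2 := ⟨n - 2, by omega⟩
  have h1 : N + 2 - 1 = N + 1 := rfl
  rw [h1, ← Finset.Ico_add_one_right_eq_Icc, Finset.sum_Ico_eq_sum_range]
  have h2 : N + 1 + 1 - 1 = N + 1 := rfl
  rw [h2]
  push_cast
  have hidx : ∀ i ∈ Finset.range (N+1),
      (-1 : ℝ) ^ (1 + i - 1) * ((N+1).choose (1 + i - 1) : ℝ) * ((1 + (i:ℝ) - 1) / (1 + (i:ℝ))) * a ^ (1 + i)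
        = (-1 : ℝ) ^ i * ((N+1).choose i : ℝ) * ((i:ℝ) / ((i:ℝ)+1)) * a ^ (i+1) := by
    intro i _
    have : 1 + i - 1 = i := by omega
    rw [this, add_comm 1 i]
    ring_nf
  rw [Finset.sum_congr rfl hidx]
  -- key combinatorial identity in ℝ
  have key : ∀ i : ℕ, ((N:ℝ)+2) * ((N+1).choose i : ℝ) * ((i:ℝ) / ((i:ℝ)+1))
      = ((N:ℝ)+2) * ((N+1).choose i : ℝ) - ((N+2).choose (i+1) : ℝ) := by
    intro i
    have hc : ((N:ℝ)+2) * ((N+1).choose i : ℝ) = ((N+2).choose (i+1) : ℝ) * ((i:ℝ)+1) := by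
      have := Nat.add_one_mul_choose_eq (N+1) i
      exact_mod_cast congrArg (Nat.cast : ℕ → ℝ) this
    rw [hc]
    have hi : ((i:ℝ)+1) ≠ 0 := by positivity
    field_simp
    ring
  have hS : ((N:ℝ)+2) * (∑ i ∈ Finset.range (N+1),
        (-1 : ℝ) ^ i * ((N+1).choose i : ℝ) * ((i:ℝ) / ((i:ℝ)+1)) * a ^ (i+1))
      = ∑ i ∈ Finset.range (N+1),
        ((((N:ℝ)+2) * ((N+1).choose i : ℝ) - ((N+2).choose (i+1) : ℝ)) * ((-1:ℝ)^i * a^(i+1))) := by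
    rw [Finset.mul_sum]
    refine Finset.sum_congr rfl fun i _ => ?_
    have := key i
    linear_combination ((-1:ℝ)^i * a^(i+1)) * this
  -- binomial expansions
  have expand : ∀ M : ℕ, (1 - a)^M = ∑ k ∈ Finset.range (M+1), (-a)^k * ((M.choose k : ℝ)) := by
    intro M
    rw [sub_eq_add_neg, add_comm, add_pow]
    simp [one_pow]
  have e1 : (1 - a)^(N+2)
      = 1 + (∑ i ∈ Finset.range (N+1), (-a)^(i+1) * (((N+2).choose (i+1) : ℝ)))
        + (-a)^(N+2) := by
    rw [expand (N+2), Finset.sum_range_succ, Finset.sum_range_succ']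
    simp
    ring
  have e2 : ((N:ℝ)+2) * a * (1 - a)^(N+1)
      = (∑ i ∈ Finset.range (N+1), ((N:ℝ)+2) * a * ((-a)^i * (((N+1).choose i : ℝ))))
        + ((N:ℝ)+2) * a * ((-a)^(N+1)) := by
    rw [expand (N+1), Finset.sum_range_succ, mul_add, Finset.mul_sum]
    simp
  have lhs : (1 - a)^(N+1) * (1 + ((N:ℝ)+2-1) * a)
      = (1 - a)^(N+2) + ((N:ℝ)+2) * a * (1 - a)^(N+1) := by
    rw [pow_succ]
    ring
  rw [lhs, e1, e2, hS]
  have hsum : ∀ i ∈ Finset.range (N+1),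
      (-a)^(i+1) * (((N+2).choose (i+1) : ℝ)) + ((N:ℝ)+2) * a * ((-a)^i * (((N+1).choose i : ℝ)))
        = ((((N:ℝ)+2) * ((N+1).choose i : ℝ) - ((N+2).choose (i+1) : ℝ)) * ((-1:ℝ)^i * a^(i+1))) := by
    intro i _
    rw [show (-a) = (-1) * a by ring]
    rw [mul_pow, mul_pow]
    ring
  have hcomb : (∑ i ∈ Finset.range (N+1), (-a)^(i+1) * (((N+2).choose (i+1) : ℝ)))
      + (∑ i ∈ Finset.range (N+1), ((N:ℝ)+2) * a * ((-a)^i * (((N+1).choose i : ℝ))))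
      = ∑ i ∈ Finset.range (N+1),
        ((((N:ℝ)+2) * ((N+1).choose i : ℝ) - ((N+2).choose (i+1) : ℝ)) * ((-1:ℝ)^i * a^(i+1))) := by
    rw [← Finset.sum_add_distrib]
    exact Finset.sum_congr rfl hsum
  linear_combination hcomb
end

section
/- Let ν be a probability measure on [0,∞) with finite α-moment m = ∫_{[0,∞)} x^α ν(dx) < ∞, and let G and H be its Williamson transform and truncated α-moment. Then for all real 0 ≤ s ≤ t, every z > 0 and every ε ∈ {0,1}: (a) lim_{n→∞} ( ⌊nt⌋ − ⌊ns⌋ ) · (n^{1/α} z)^{−α} H( n^{1/α} z ) = m (t − s) z^{−α}, and (b) lim_{n→∞} G( n^{1/α} z )^{⌊nt⌋ − ⌊ns⌋ − ε} = exp( −m (t − s) z^{−α} ). -/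
/-!
With `r_n = n^{1/α} z` one has `r_n^α = n z^α`. For (a), `H(r_n) → m` by monotone convergence,
and `(⌊nt⌋ - ⌊ns⌋)/n → t - s`. For (b), `r^α (1 - G r) = ∫ min (x^α) (r^α) dν → m` by dominated
convergence, so `n (1 - G(r_n)) → m z^{-α}`; since `log g ~ g - 1` as `g → 1`, this gives
`G(r_n)^{k_n} → exp (-m (t - s) z^{-α})` whenever `k_n / n → t - s`.
-/

open MeasureTheory Filter Real Topology Set

lemma tendsto_intFloor_mul_div_atTop (t : ℝ) :
    Tendsto (fun n : ℕ => (⌊n * t⌋ : ℝ) / n) atTop (𝓝 t) := by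
  have hlow : Tendsto (fun n : ℕ => t - 1 / (n : ℝ)) atTop (𝓝 t) := by
    simpa using tendsto_const_nhds.sub (tendsto_one_div_atTop_nhds_zero_nat (𝕜 := ℝ))
  refine tendsto_of_tendsto_of_tendsto_of_le_of_le' hlow tendsto_const_nhds ?_ ?_
  · filter_upwards [eventually_gt_atTop 0] with n hn
    have hn : (0 : ℝ) < n := by exact_mod_cast hn
    rw [sub_le_iff_le_add, ← add_div, le_div_iff₀ hn]
    linarith [Int.lt_floor_add_one ((n : ℝ) * t)]
  · filter_upwards [eventually_gt_atTop 0] with n hn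
    have hn : (0 : ℝ) < n := by exact_mod_cast hn
    rw [div_le_iff₀ hn, mul_comm]
    exact Int.floor_le _

lemma tendsto_floor_mul_sub_floor_mul_sub_div_atTop (s t : ℝ) (ε : ℤ) :
    Tendsto (fun n : ℕ => ((⌊n * t⌋ - ⌊n * s⌋ - ε : ℤ) : ℝ) / n) atTop (𝓝 (t - s)) := by
  have h := ((tendsto_intFloor_mul_div_atTop t).sub (tendsto_intFloor_mul_div_atTop s)).sub
    (tendsto_const_div_atTop_nhds_zero_nat (ε : ℝ))
  rw [sub_zero] at h
  refine h.congr fun n => ?_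
  push_cast
  ring

lemma rpow_inv_mul_rpow {α x z : ℝ} (hα : α ≠ 0) (hx : 0 ≤ x) (hz : 0 ≤ z) :
    (x ^ α⁻¹ * z) ^ α = x * z ^ α := by
  rw [mul_rpow (by positivity) hz, ← rpow_mul hx, inv_mul_cancel₀ hα, rpow_one]

lemma rpow_inv_mul_rpow_neg {α x z : ℝ} (hα : α ≠ 0) (hx : 0 ≤ x) (hz : 0 ≤ z) :
    (x ^ α⁻¹ * z) ^ (-α) = x⁻¹ * z ^ (-α) := by
  rw [rpow_neg (by positivity), rpow_inv_mul_rpow hα hx hz, mul_inv, rpow_neg hz]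

lemma tendsto_natCast_rpow_inv_mul_atTop {α z : ℝ} (hα : 0 < α) (hz : 0 < z) :
    Tendsto (fun n : ℕ => (n : ℝ) ^ α⁻¹ * z) atTop atTop :=
  ((tendsto_rpow_atTop (inv_pos.mpr hα)).comp tendsto_natCast_atTop_atTop).atTop_mul_const hz

lemma tendsto_mul_log_of_tendsto_mul_one_sub {ι : Type*} {l : Filter ι} {a g : ι → ℝ} {c : ℝ}
    (ha : ∀ᶠ i in l, 0 ≤ a i) (hg : Tendsto g l (𝓝 1))
    (h : Tendsto (fun i => a i * (1 - g i)) l (𝓝 c)) :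
    Tendsto (fun i => a i * log (g i)) l (𝓝 (-c)) := by
  have hlow : Tendsto (fun i => -(a i * (1 - g i)) / g i) l (𝓝 (-c)) := by
    have h' := h.neg.div hg one_ne_zero
    rwa [div_one] at h'
  have hg_pos : ∀ᶠ i in l, 0 < g i := hg.eventually (lt_mem_nhds one_pos)
  refine tendsto_of_tendsto_of_tendsto_of_le_of_le' hlow h.neg ?_ ?_
  · filter_upwards [ha, hg_pos] with i hai hgi
    calc -(a i * (1 - g i)) / g i = a i * (1 - (g i)⁻¹) := by field_simp; ring
      _ ≤ a i * log (g i) := mul_le_mul_of_nonneg_left (one_sub_inv_le_log_of_pos hgi) hai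
  · filter_upwards [ha, hg_pos] with i hai hgi
    calc a i * log (g i) ≤ a i * (g i - 1) :=
          mul_le_mul_of_nonneg_left (log_le_sub_one_of_pos hgi) hai
      _ = -(a i * (1 - g i)) := by ring

lemma tendsto_zpow_of_tendsto_mul_one_sub {g : ℕ → ℝ} {k : ℕ → ℤ} {c τ : ℝ}
    (hg : Tendsto (fun n : ℕ => n * (1 - g n)) atTop (𝓝 c))
    (hk : Tendsto (fun n : ℕ => (k n : ℝ) / n) atTop (𝓝 τ)) :
    Tendsto (fun n => g n ^ k n) atTop (𝓝 (exp (-c * τ))) := by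
  have hg_one : Tendsto g atTop (𝓝 1) := by
    have h := tendsto_const_nhds (x := (1 : ℝ)).sub
      ((tendsto_inv_atTop_nhds_zero_nat (𝕜 := ℝ)).mul hg)
    rw [zero_mul, sub_zero] at h
    refine h.congr' ?_
    filter_upwards [eventually_gt_atTop 0] with n hn
    field_simp
    ring
  have hlog := tendsto_mul_log_of_tendsto_mul_one_sub
    (Eventually.of_forall fun n => Nat.cast_nonneg n) hg_one hg
  have hexp := (continuous_exp.tendsto _).comp (hk.mul hlog)
  rw [mul_comm] at hexp
  refine hexp.congr' ?_
  filter_upwards [eventually_gt_atTop 0, hg_one.eventually (lt_mem_nhds one_pos)] with n hn hgn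
  rw [Function.comp_apply, ← rpow_intCast, rpow_def_of_pos hgn]
  congr 1
  field_simp

lemma tendsto_integral_min_atTop {X : Type*} [MeasurableSpace X] {μ : Measure X} {f : X → ℝ}
    (hf : Integrable f μ) :
    Tendsto (fun R => ∫ x, min (f x) R ∂μ) atTop (𝓝 (∫ x, f x ∂μ)) := by
  refine tendsto_integral_filter_of_dominated_convergence (fun x => ‖f x‖)
    (Eventually.of_forall fun R => hf.1.inf aestronglyMeasurable_const) ?_ hf.norm ?_
  · filter_upwards [eventually_ge_atTop 0] with R hR
    refine Eventually.of_forall fun x => ?_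
    rcases le_total (f x) R with h | h
    · rw [min_eq_left h]
    · rw [min_eq_right h, Real.norm_of_nonneg hR, Real.norm_eq_abs]
      exact h.trans (le_abs_self _)
  · refine Eventually.of_forall fun x => tendsto_const_nhds.congr' ?_
    filter_upwards [eventually_ge_atTop (f x)] with R hR
    exact (min_eq_left hR).symm

lemma tendsto_setIntegral_Icc_zero_atTop {ν : Measure ℝ} {f : ℝ → ℝ}
    (hν : ∀ᵐ x ∂ν, 0 ≤ x) (hf : Integrable f ν) :
    Tendsto (fun r => ∫ x in Icc 0 r, f x ∂ν) atTop (𝓝 (∫ x, f x ∂ν)) := by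
  have hunion : ⋃ r : ℝ, Icc 0 r = Ici 0 :=
    Subset.antisymm (iUnion_subset fun r x hx => hx.1)
      fun x hx => mem_iUnion.mpr ⟨x, hx, le_rfl⟩
  have h := tendsto_setIntegral_of_monotone (μ := ν) (s := fun r : ℝ => Icc 0 r)
    (fun r => measurableSet_Icc) (fun a b hab => Icc_subset_Icc le_rfl hab) hf.integrableOn
  rwa [hunion, Measure.restrict_eq_self_of_ae_mem (s := Ici 0) hν] at h

lemma rpow_mul_one_sub_max_one_sub_div_rpow {α x r : ℝ} (hx : 0 ≤ x) (hr : 0 < r) :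
    r ^ α * (1 - max (1 - (x / r) ^ α) 0) = min (x ^ α) (r ^ α) := by
  have hrα : 0 < r ^ α := by positivity
  rw [div_rpow hx hr.le]
  rcases le_total (x ^ α) (r ^ α) with h | h
  · rw [min_eq_left h, max_eq_left (by rwa [sub_nonneg, div_le_one hrα])]
    field_simp
    ring
  · rw [min_eq_right h, max_eq_right (by rwa [sub_nonpos, one_le_div hrα])]
    ring

section Williamson

variable {α : ℝ} {ν : Measure ℝ} [IsProbabilityMeasure ν]

lemma rpow_mul_one_sub_williamson_eq (hν : ∀ᵐ x ∂ν, 0 ≤ x) {r : ℝ} (hr : 0 < r) :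
    r ^ α * (1 - ∫ x, max (1 - (x / r) ^ α) 0 ∂ν) = ∫ x, min (x ^ α) (r ^ α) ∂ν := by
  have hint : Integrable (fun x => max (1 - (x / r) ^ α) 0) ν := by
    refine Integrable.of_bound (C := 1) (Measurable.aestronglyMeasurable (by fun_prop)) ?_
    filter_upwards [hν] with x hx
    have : 0 ≤ (x / r) ^ α := by positivity
    rw [Real.norm_of_nonneg (le_max_right _ _)]
    exact max_le (by linarith) zero_le_one
  have hlin : ∫ x, r ^ α * (1 - max (1 - (x / r) ^ α) 0) ∂ν
      = r ^ α * (1 - ∫ x, max (1 - (x / r) ^ α) 0 ∂ν) := by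
    rw [integral_const_mul, integral_sub (integrable_const 1) hint, integral_const]
    simp
  rw [← hlin]
  refine integral_congr_ae ?_
  filter_upwards [hν] with x hx
  exact rpow_mul_one_sub_max_one_sub_div_rpow hx hr

lemma tendsto_rpow_mul_one_sub_williamson_atTop (hα : 0 < α) (hν : ∀ᵐ x ∂ν, 0 ≤ x)
    (hmo : Integrable (fun x => x ^ α) ν) :
    Tendsto (fun r => r ^ α * (1 - ∫ x, max (1 - (x / r) ^ α) 0 ∂ν)) atTop
      (𝓝 (∫ x, x ^ α ∂ν)) := by
  refine ((tendsto_integral_min_atTop hmo).comp (tendsto_rpow_atTop hα)).congr' ?_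
  filter_upwards [eventually_gt_atTop 0] with r hr
  exact (rpow_mul_one_sub_williamson_eq hν hr).symm

end Williamson

theorem kendall_fdd_limits_finite_moment_general
    (α : ℝ) (hα : 0 < α)
    (ν : Measure ℝ) [IsProbabilityMeasure ν] (hν : ν (Set.Iio 0) = 0)
    (G H : ℝ → ℝ)
    (hG : ∀ t, 0 < t → G t = ∫ x, max (1 - (x / t) ^ α) 0 ∂ν)
    (hH : ∀ t, 0 < t → H t = ∫ x in Set.Icc 0 t, x ^ α ∂ν)
    (hmo : Integrable (fun x => x ^ α) ν)
    (s t : ℝ) (z : ℝ) (hz : 0 < z)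
    (ε : ℤ) :
    Tendsto (fun n : ℕ =>
        ((⌊(n : ℝ) * t⌋ - ⌊(n : ℝ) * s⌋ : ℤ) : ℝ) *
          ((n : ℝ) ^ (α⁻¹) * z) ^ (-α) * H ((n : ℝ) ^ (α⁻¹) * z)) atTop
      (𝓝 ((∫ x, x ^ α ∂ν) * (t - s) * z ^ (-α))) ∧
    Tendsto (fun n : ℕ =>
        G ((n : ℝ) ^ (α⁻¹) * z) ^ (⌊(n : ℝ) * t⌋ - ⌊(n : ℝ) * s⌋ - ε)) atTop
      (𝓝 (Real.exp (-(∫ x, x ^ α ∂ν) * (t - s) * z ^ (-α)))) := by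
  have hν₀ : ∀ᵐ x ∂ν, 0 ≤ x := by simpa using measure_eq_zero_iff_ae_notMem.mp hν
  set m := ∫ x, x ^ α ∂ν
  have hr_top := tendsto_natCast_rpow_inv_mul_atTop hα hz
  have hr_pos : ∀ᶠ n : ℕ in atTop, 0 < (n : ℝ) ^ α⁻¹ * z := hr_top.eventually_gt_atTop 0
  constructor
  · have hlim := ((tendsto_floor_mul_sub_floor_mul_sub_div_atTop s t 0).mul_const (z ^ (-α))).mul
      ((tendsto_setIntegral_Icc_zero_atTop hν₀ hmo).comp hr_top)
    rw [show m * (t - s) * z ^ (-α) = (t - s) * z ^ (-α) * m by ring]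
    refine hlim.congr' ?_
    filter_upwards [hr_pos] with n hn
    rw [Function.comp_apply, ← hH _ hn, rpow_inv_mul_rpow_neg hα.ne' n.cast_nonneg hz.le, sub_zero]
    ring
  · have hG_lim : Tendsto (fun n : ℕ => n * (1 - G ((n : ℝ) ^ α⁻¹ * z))) atTop
        (𝓝 (m * z ^ (-α))) := by
      refine (((tendsto_rpow_mul_one_sub_williamson_atTop hα hν₀ hmo).comp hr_top).mul_const
        _).congr' ?_
      filter_upwards [hr_pos] with n hn
      rw [Function.comp_apply, ← hG _ hn, rpow_inv_mul_rpow hα.ne' n.cast_nonneg hz.le,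
        rpow_neg hz.le]
      field_simp
    convert tendsto_zpow_of_tendsto_mul_one_sub hG_lim
      (tendsto_floor_mul_sub_floor_mul_sub_div_atTop s t ε) using 3
    ring

/-- if the α-moment m = ∫ x^α ν(dx) is finite then, for 0 ≤ s ≤ t, z > 0 and
ε ∈ {0,1}:
(a) (⌊nt⌋ − ⌊ns⌋) (n^{1/α} z)^{−α} H(n^{1/α} z) → m (t − s) z^{−α}, and
(b) G(n^{1/α} z)^{⌊nt⌋ − ⌊ns⌋ − ε} → exp( −m (t − s) z^{−α} ) as n → ∞. -/
theorem kendall_fdd_limits_finite_moment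
    (α : ℝ) (hα : 0 < α)
    (ν : Measure ℝ) [IsProbabilityMeasure ν] (hν : ν (Set.Iio 0) = 0)
    (F G H : ℝ → ℝ)
    (hF : ∀ t, F t = (ν (Set.Iic t)).toReal)
    (hG : ∀ t, 0 < t → G t = ∫ x, max (1 - (x / t) ^ α) 0 ∂ν)
    (hH : ∀ t, 0 < t → H t = ∫ x in Set.Icc 0 t, x ^ α ∂ν)
    (hmo : Integrable (fun x => x ^ α) ν)
    (s t : ℝ) (hs : 0 ≤ s) (hst : s ≤ t) (z : ℝ) (hz : 0 < z)
    (ε : ℤ) (hε : ε = 0 ∨ ε = 1) :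
    Tendsto (fun n : ℕ =>
        ((⌊(n : ℝ) * t⌋ - ⌊(n : ℝ) * s⌋ : ℤ) : ℝ) *
          ((n : ℝ) ^ (α⁻¹) * z) ^ (-α) * H ((n : ℝ) ^ (α⁻¹) * z)) atTop
      (𝓝 ((∫ x, x ^ α ∂ν) * (t - s) * z ^ (-α))) ∧
    Tendsto (fun n : ℕ =>
        G ((n : ℝ) ^ (α⁻¹) * z) ^ (⌊(n : ℝ) * t⌋ - ⌊(n : ℝ) * s⌋ - ε)) atTop
      (𝓝 (Real.exp (-(∫ x, x ^ α ∂ν) * (t - s) * z ^ (-α)))) :=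
  kendall_fdd_limits_finite_moment_general α hα ν hν G H hG hH hmo s t z hz ε
end
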